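/- Let p ≥ 1, let N* be the real vector space of p×p complex skew-Hermitian matrices with Euclidean norm ‖m‖ = (Tr(m mᴴ))^{1/2} and Lebesgue measure, and let f₀(m) = e^{-‖m‖}/‖m‖^{p²/2}. There is no g ∈ L²(N*) such that for every lower triangular p×p complex matrix s with positive real diagonal entries one has (‖sᴴ m s‖/‖m‖)^{p²/2}·f₀(sᴴ m s) − f₀(m) = (‖sᴴ m s‖/‖m‖)^{p²/2}·g(sᴴ m s) − g(m) for almost every m ∈ N*. In other words, the 1-cocycle β(s) = T_a(s)f₀ − f₀ of the representation T_a of the group S is not a coboundary, so the representation of Theorem 1 is special. -/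

import Mathlib

open MeasureTheory Matrix Set
open scoped ENNReal

noncomputable section

instance (p : ℕ) : MeasurableSpace (Matrix (Fin p) (Fin p) ℂ) :=
  inferInstanceAs (MeasurableSpace ((Fin p) → (Fin p) → ℂ))

instance (p : ℕ) : BorelSpace (Matrix (Fin p) (Fin p) ℂ) :=
  inferInstanceAs (BorelSpace ((Fin p) → (Fin p) → ℂ))

/-- `N*`, the real vector space of `p×p` complex skew-Hermitian matrices (`mᴴ = -m`),
of real dimension `p²`. -/
abbrev SkewHerm (p : ℕ) : Type := skewAdjoint (Matrix (Fin p) (Fin p) ℂ)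

/-- The Euclidean (Frobenius) norm `‖m‖ = (Tr (m mᴴ))^{1/2}` on matrices. -/
def matNorm {p : ℕ} (m : Matrix (Fin p) (Fin p) ℂ) : ℝ :=
  Real.sqrt ((m * mᴴ).trace.re)

/-- The function `f₀(m) = e^{-‖m‖} / ‖m‖^{p²/2}` on `N*`. -/
def f₀ (p : ℕ) (m : SkewHerm p) : ℝ :=
  Real.exp (-matNorm (m : Matrix (Fin p) (Fin p) ℂ)) /
    matNorm (m : Matrix (Fin p) (Fin p) ℂ) ^ ((p ^ 2 : ℝ) / 2)

/-- The action `m ↦ sᴴ m s` of a matrix `s` on the space `N*` of skew-Hermitian matrices. -/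
def conjAct {p : ℕ} (s : Matrix (Fin p) (Fin p) ℂ) (m : SkewHerm p) : SkewHerm p :=
  ⟨sᴴ * (m : Matrix (Fin p) (Fin p) ℂ) * s, by
    have hm : (m : Matrix (Fin p) (Fin p) ℂ)ᴴ = -(m : Matrix (Fin p) (Fin p) ℂ) := m.2
    simp [skewAdjoint.mem_iff, Matrix.star_eq_conjTranspose, Matrix.conjTranspose_mul,
      Matrix.mul_assoc, hm]⟩

/-- The operator `T_a(s) f (m) = (‖sᴴ m s‖/‖m‖)^{p²/2} · f(sᴴ m s)` associated with the
multiplicative cocycle `a(m) = ‖m‖^{p²/2}`. -/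
def Ta (p : ℕ) (s : Matrix (Fin p) (Fin p) ℂ) (f : SkewHerm p → ℂ) : SkewHerm p → ℂ :=
  fun m =>
    (((matNorm (sᴴ * (m : Matrix (Fin p) (Fin p) ℂ) * s) /
        matNorm (m : Matrix (Fin p) (Fin p) ℂ)) ^ ((p ^ 2 : ℝ) / 2) : ℝ) : ℂ) *
      f (conjAct s m)


/-!
Restricting to the scalar matrices `s = √t · 1` turns `T_a(s)` into the dilation
`g ↦ t^{d/2} g(t ·)`, `d = p² = dim N*`, which is an isometry of `L²(N*)`; hence every
coboundary `T_a(s) g - g` has `L²` norm at most `2 ‖g‖₂`, uniformly in `t`. The cocycle of `f₀`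
is `(e^{-t‖m‖} - e^{-‖m‖}) / ‖m‖^{d/2}`. For `t = 2^{k+1}` and `1 ≤ j ≤ k`, on the dyadic shell
`2^{-j-1} < ‖m‖ < 2^{-j}` its square is at least `(e^{-1/2} - e^{-1})² 2^{jd}`, while the shell
has `2^{-jd}` times the measure of the shell `1/2 < ‖m‖ < 1`. So the squared `L²` norm of the
cocycle grows at least linearly in `k`, and it is not a coboundary.
-/

open Module
open scoped Pointwise

def PosHomogeneous {E : Type*} [SMul ℝ E] (r : E → ℝ) : Prop :=
  ∀ t : ℝ, 0 < t → ∀ x, r (t • x) = t * r x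

def dilation {E F : Type*} [AddCommGroup E] [Module ℝ E] [AddCommGroup F] [Module ℝ F]
    (t : ℝ) (g : E → F) (x : E) : F :=
  t ^ ((finrank ℝ E : ℝ) / 2) • g (t • x)

def gaugeProfile {E : Type*} [AddCommGroup E] [Module ℝ E] (r : E → ℝ) (x : E) : ℝ :=
  Real.exp (-r x) / r x ^ ((finrank ℝ E : ℝ) / 2)

def dyadicShell {E : Type*} (r : E → ℝ) (j : ℕ) : Set E :=
  r ⁻¹' Ioo (2⁻¹ ^ (j + 1)) (2⁻¹ ^ j)

section Dilation

variable {E F : Type*} [NormedAddCommGroup E] [NormedSpace ℝ E] [FiniteDimensional ℝ E]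
  [MeasurableSpace E] [BorelSpace E] [NormedAddCommGroup F] [NormedSpace ℝ F]
  (μ : Measure E) [μ.IsAddHaarMeasure] {t : ℝ} {g : E → F}

theorem aestronglyMeasurable_dilation (ht : t ≠ 0) (hg : AEStronglyMeasurable g μ) :
    AEStronglyMeasurable (dilation t g) μ :=
  (hg.comp_quasiMeasurePreserving (Measure.quasiMeasurePreserving_smul μ ht)).const_smul _

theorem eLpNorm_dilation (ht : 0 < t) (hg : AEStronglyMeasurable g μ) :
    eLpNorm (dilation t g) 2 μ = eLpNorm g 2 μ := by
  have hmap := Measure.map_addHaar_smul μ ht.ne'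
  have hcomp : eLpNorm (fun x => g (t • x)) 2 μ
      = ENNReal.ofReal ((t ^ finrank ℝ E)⁻¹) ^ (2⁻¹ : ℝ) * eLpNorm g 2 μ := by
    rw [← Function.comp_def, ← eLpNorm_map_measure (by rw [hmap]; exact hg.smul_measure _)
      (measurable_const_smul t).aemeasurable, hmap, eLpNorm_smul_measure_of_ne_top (by simp),
      abs_of_pos (by positivity)]
    norm_num
  have hunit : ‖t ^ ((finrank ℝ E : ℝ) / 2)‖ₑ * ENNReal.ofReal ((t ^ finrank ℝ E)⁻¹) ^ (2⁻¹ : ℝ)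
      = 1 := by
    rw [Real.enorm_of_nonneg (by positivity), ENNReal.ofReal_rpow_of_nonneg (by positivity)
      (by norm_num), ← ENNReal.ofReal_mul (by positivity), Real.inv_rpow (by positivity),
      ← Real.rpow_natCast, ← Real.rpow_mul ht.le, div_eq_mul_inv, mul_inv_cancel₀
      (Real.rpow_pos_of_pos ht _).ne', ENNReal.ofReal_one]
  rw [show dilation t g = t ^ ((finrank ℝ E : ℝ) / 2) • fun x => g (t • x) from rfl,
    eLpNorm_const_smul, hcomp, ← mul_assoc, hunit, one_mul]

theorem eLpNorm_dilation_sub_le (ht : 0 < t) (hg : AEStronglyMeasurable g μ) :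
    eLpNorm (dilation t g - g) 2 μ ≤ 2 * eLpNorm g 2 μ :=
  calc eLpNorm (dilation t g - g) 2 μ ≤ eLpNorm (dilation t g) 2 μ + eLpNorm g 2 μ :=
        eLpNorm_sub_le (aestronglyMeasurable_dilation μ ht.ne' hg) hg one_le_two
    _ = 2 * eLpNorm g 2 μ := by rw [eLpNorm_dilation μ ht hg, two_mul]

end Dilation

theorem mul_rpow_le_exp_sub_exp_div_rpow {ρ q : ℝ} {j k : ℕ} (hq : 0 ≤ q) (hj : 1 ≤ j)
    (hjk : j ≤ k) (hρ : ρ ∈ Ioo (2⁻¹ ^ (j + 1)) (2⁻¹ ^ j)) :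
    (Real.exp (-2⁻¹) - Real.exp (-1)) * (2 ^ j) ^ q
      ≤ (Real.exp (-ρ) - Real.exp (-(2 ^ (k + 1) * ρ))) / ρ ^ q := by
  obtain ⟨hlo, hhi⟩ := hρ
  have hρpos : 0 < ρ := lt_trans (by positivity) hlo
  have hρhalf : ρ ≤ 2⁻¹ := hhi.le.trans (pow_le_of_le_one (by norm_num) (by norm_num) (by omega))
  have hscaled : 1 ≤ 2 ^ (k + 1) * ρ :=
    calc (1 : ℝ) = 2 ^ (j + 1) * 2⁻¹ ^ (j + 1) := by rw [← mul_pow]; norm_num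
      _ ≤ 2 ^ (k + 1) * ρ := by gcongr; norm_num
  have hnum : Real.exp (-2⁻¹) - Real.exp (-1)
      ≤ Real.exp (-ρ) - Real.exp (-(2 ^ (k + 1) * ρ)) := by
    gcongr
  have hden : (2 ^ j) ^ q ≤ (ρ ^ q)⁻¹ := by
    rw [← Real.inv_rpow hρpos.le]
    gcongr
    rw [le_inv_comm₀ (by positivity) hρpos, ← inv_pow]
    exact hhi.le
  rw [div_eq_mul_inv]
  gcongr
  exact sub_nonneg.2 (Real.exp_le_exp.2 (by linarith))

theorem pairwise_disjoint_dyadicShell {E : Type*} (r : E → ℝ) :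
    Pairwise (Function.onFun Disjoint (dyadicShell r)) := by
  refine (pairwise_disjoint_on _).2 fun i j hij => Set.disjoint_left.2 fun x hi hj => ?_
  have : (2⁻¹ : ℝ) ^ j ≤ 2⁻¹ ^ (i + 1) := pow_le_pow_of_le_one (by norm_num) (by norm_num) hij
  exact (hj.2.trans_le this).not_gt hi.1

section PosHomogeneous

variable {E : Type*} [AddCommGroup E] [Module ℝ E] {r : E → ℝ}

theorem PosHomogeneous.dyadicShell_eq_smul (hr : PosHomogeneous r) (j : ℕ) :
    dyadicShell r j = (2⁻¹ ^ j : ℝ) • dyadicShell r 0 := by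
  have hc : (0 : ℝ) < 2⁻¹ ^ j := by positivity
  ext x
  rw [mem_smul_set_iff_inv_smul_mem₀ hc.ne']
  simp only [dyadicShell, mem_preimage, mem_Ioo, hr _ (inv_pos.2 hc), zero_add, pow_zero,
    one_mul, lt_inv_mul_iff₀ hc, inv_mul_lt_iff₀ hc, mul_one, pow_succ]

theorem PosHomogeneous.measure_dyadicShell_zero_pos [TopologicalSpace E] [MeasurableSpace E]
    (μ : Measure E) [μ.IsOpenPosMeasure] (hr : PosHomogeneous r) (hcont : Continuous r)
    (hpos : ∃ x, 0 < r x) : 0 < μ (dyadicShell r 0) := by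
  obtain ⟨x, hx⟩ := hpos
  refine (isOpen_Ioo.preimage hcont).measure_pos μ ⟨(3 / 4 / r x) • x, ?_⟩
  rw [mem_preimage, hr _ (by positivity), div_mul_cancel₀ _ hx.ne']
  norm_num

theorem PosHomogeneous.dilation_gaugeProfile_sub_apply (hr : PosHomogeneous r) {t : ℝ}
    (ht : 0 < t) {x : E} (hx : 0 < r x) :
    (dilation t (gaugeProfile r) - gaugeProfile r) x
      = (Real.exp (-(t * r x)) - Real.exp (-r x)) / r x ^ ((finrank ℝ E : ℝ) / 2) := by
  have htq : 0 < t ^ ((finrank ℝ E : ℝ) / 2) := by positivity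
  simp only [Pi.sub_apply, dilation, gaugeProfile, hr t ht, smul_eq_mul,
    Real.mul_rpow ht.le hx.le]
  field_simp

theorem PosHomogeneous.le_enorm_dilation_gaugeProfile_sub_sq (hr : PosHomogeneous r)
    {j k : ℕ} (hj : 1 ≤ j) (hjk : j ≤ k) {x : E} (hx : x ∈ dyadicShell r j) :
    ENNReal.ofReal ((Real.exp (-2⁻¹) - Real.exp (-1)) ^ 2 * (2 ^ j) ^ finrank ℝ E)
      ≤ ‖(dilation (2 ^ (k + 1)) (gaugeProfile r) - gaugeProfile r) x‖ₑ ^ 2 := by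
  have hrx : 0 < r x := lt_trans (by positivity) hx.1
  have hc₀ : 0 ≤ Real.exp (-2⁻¹) - Real.exp (-1) :=
    sub_nonneg.2 (Real.exp_le_exp.2 (by norm_num))
  have htx : r x ≤ 2 ^ (k + 1) * r x := le_mul_of_one_le_left hrx.le (one_le_pow₀ one_le_two)
  rw [hr.dilation_gaugeProfile_sub_apply (by positivity) hrx, Real.enorm_eq_ofReal_abs,
    ← ENNReal.ofReal_pow (abs_nonneg _), abs_div, abs_sub_comm,
    abs_of_nonneg (sub_nonneg.2 (Real.exp_le_exp.2 (by linarith))), abs_of_pos (by positivity)]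
  refine ENNReal.ofReal_le_ofReal ?_
  calc (Real.exp (-2⁻¹) - Real.exp (-1)) ^ 2 * (2 ^ j) ^ finrank ℝ E
      = ((Real.exp (-2⁻¹) - Real.exp (-1)) * (2 ^ j) ^ ((finrank ℝ E : ℝ) / 2)) ^ 2 := by
        rw [mul_pow, ← Real.rpow_mul_natCast (by positivity), ← Real.rpow_natCast]
        norm_num
    _ ≤ _ := by
        gcongr
        exact mul_rpow_le_exp_sub_exp_div_rpow (by positivity) hj hjk hx

end PosHomogeneous

section Gauge

variable {E : Type*} [NormedAddCommGroup E] [NormedSpace ℝ E] [FiniteDimensional ℝ E]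
  [MeasurableSpace E] [BorelSpace E] (μ : Measure E) [μ.IsAddHaarMeasure] {r : E → ℝ}

theorem PosHomogeneous.measure_dyadicShell (hr : PosHomogeneous r) (j : ℕ) :
    μ (dyadicShell r j) = ENNReal.ofReal (2⁻¹ ^ j) ^ finrank ℝ E * μ (dyadicShell r 0) := by
  rw [hr.dyadicShell_eq_smul, Measure.addHaar_smul, abs_of_pos (by positivity),
    ENNReal.ofReal_pow (by positivity)]

theorem PosHomogeneous.nat_mul_le_lintegral_dilation_gaugeProfile_sub (hr : PosHomogeneous r)
    (hcont : Continuous r) (k : ℕ) :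
    k * (ENNReal.ofReal ((Real.exp (-2⁻¹) - Real.exp (-1)) ^ 2) * μ (dyadicShell r 0))
      ≤ ∫⁻ x, ‖(dilation (2 ^ (k + 1)) (gaugeProfile r) - gaugeProfile r) x‖ₑ ^ 2 ∂μ := by
  set c := ENNReal.ofReal ((Real.exp (-2⁻¹) - Real.exp (-1)) ^ 2) * μ (dyadicShell r 0)
  set F := fun x => ‖(dilation (2 ^ (k + 1)) (gaugeProfile r) - gaugeProfile r) x‖ₑ ^ 2
  have hmeas (j : ℕ) : MeasurableSet (dyadicShell r j) := hcont.measurable measurableSet_Ioo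
  have hshell : ∀ j ∈ Finset.Icc 1 k, c ≤ ∫⁻ x in dyadicShell r j, F x ∂μ := by
    intro j hj
    rw [Finset.mem_Icc] at hj
    calc c = ENNReal.ofReal ((Real.exp (-2⁻¹) - Real.exp (-1)) ^ 2 * (2 ^ j) ^ finrank ℝ E)
          * μ (dyadicShell r j) := by
          rw [hr.measure_dyadicShell μ, ← mul_assoc, ← ENNReal.ofReal_pow (by positivity),
            ← ENNReal.ofReal_mul (by positivity), mul_assoc, ← mul_pow, ← mul_pow,
            mul_inv_cancel₀ two_ne_zero, one_pow, one_pow, mul_one]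
      _ = ∫⁻ _ in dyadicShell r j, ENNReal.ofReal
            ((Real.exp (-2⁻¹) - Real.exp (-1)) ^ 2 * (2 ^ j) ^ finrank ℝ E) ∂μ :=
          (setLIntegral_const _ _).symm
      _ ≤ ∫⁻ x in dyadicShell r j, F x ∂μ :=
          setLIntegral_mono' (hmeas j) fun x hx =>
            hr.le_enorm_dilation_gaugeProfile_sub_sq hj.1 hj.2 hx
  calc (k : ℝ≥0∞) * c = ∑ j ∈ Finset.Icc 1 k, c := by simp
    _ ≤ ∑ j ∈ Finset.Icc 1 k, ∫⁻ x in dyadicShell r j, F x ∂μ := Finset.sum_le_sum hshell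
    _ = ∫⁻ x in ⋃ j ∈ Finset.Icc 1 k, dyadicShell r j, F x ∂μ :=
        (lintegral_biUnion_finset ((pairwise_disjoint_dyadicShell r).set_pairwise _)
          (fun j _ => hmeas j) F).symm
    _ ≤ ∫⁻ x, F x ∂μ := setLIntegral_le_lintegral _ _

theorem PosHomogeneous.exists_lt_eLpNorm_dilation_gaugeProfile_sub (hr : PosHomogeneous r)
    (hcont : Continuous r) (hpos : ∃ x, 0 < r x) {C : ℝ≥0∞} (hC : C ≠ ∞) :
    ∃ t > 0, C < eLpNorm (dilation t (gaugeProfile r) - gaugeProfile r) 2 μ := by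
  have hc : ENNReal.ofReal ((Real.exp (-2⁻¹) - Real.exp (-1)) ^ 2) * μ (dyadicShell r 0) ≠ 0 := by
    refine mul_ne_zero ?_ (hr.measure_dyadicShell_zero_pos μ hcont hpos).ne'
    have : Real.exp (-1) < Real.exp (-2⁻¹) := Real.exp_lt_exp.2 (by norm_num)
    simp only [ne_eq, ENNReal.ofReal_eq_zero, not_le]
    nlinarith
  obtain ⟨k, hk⟩ := ENNReal.exists_nat_mul_gt hc (ENNReal.pow_ne_top hC (n := 2))
  refine ⟨2 ^ (k + 1), by positivity, lt_of_pow_lt_pow_left' 2 ?_⟩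
  have hsq := eLpNorm_nnreal_pow_eq_lintegral (μ := μ)
    (f := dilation (2 ^ (k + 1)) (gaugeProfile r) - gaugeProfile r) (p := 2) two_ne_zero
  simp only [ENNReal.coe_ofNat, NNReal.coe_ofNat, ENNReal.rpow_two] at hsq
  rw [hsq]
  exact hk.trans_le (hr.nat_mul_le_lintegral_dilation_gaugeProfile_sub μ hcont k)

end Gauge

-- The sup norm only serves to make `SkewHerm p` a normed space, so that the Haar measure scaling
-- lemmas apply; its topology is the product topology the statement is phrased in.
instance (p : ℕ) : NormedAddCommGroup (Matrix (Fin p) (Fin p) ℂ) :=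
  inferInstanceAs (NormedAddCommGroup (Fin p → Fin p → ℂ))

instance (p : ℕ) : NormedSpace ℝ (Matrix (Fin p) (Fin p) ℂ) :=
  inferInstanceAs (NormedSpace ℝ (Fin p → Fin p → ℂ))

instance (p : ℕ) : NormedSpace ℝ (SkewHerm p) where
  norm_smul_le r x := (norm_smul r (x : Matrix (Fin p) (Fin p) ℂ)).le

instance (p : ℕ) : BorelSpace (SkewHerm p) :=
  Subtype.borelSpace _

instance (p : ℕ) : FiniteDimensional ℝ (SkewHerm p) :=
  inferInstanceAs (FiniteDimensional ℝ (skewAdjoint.submodule ℝ (Matrix (Fin p) (Fin p) ℂ)))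

theorem skewAdjoint.negISMul_bijective {A : Type*} [AddCommGroup A] [Module ℂ A]
    [StarAddMonoid A] [StarModule ℂ A] : Function.Bijective (skewAdjoint.negISMul (A := A)) := by
  refine ⟨fun a b h => ?_, fun a => ⟨⟨Complex.I • (a : A), by simp⟩, ?_⟩⟩
  · ext
    simpa using congrArg (fun x : selfAdjoint A => Complex.I • (x : A)) h
  · ext
    simp [smul_smul]

theorem finrank_skewHerm (p : ℕ) : finrank ℝ (SkewHerm p) = p ^ 2 := by
  have e := (StarModule.decomposeProdAdjoint ℝ (Matrix (Fin p) (Fin p) ℂ)).trans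
    (LinearEquiv.prodCongr (LinearEquiv.ofBijective _ skewAdjoint.negISMul_bijective).symm
      (LinearEquiv.refl ℝ (SkewHerm p)))
  have hdim := e.finrank_eq
  rw [finrank_prod, finrank_matrix, Complex.finrank_real_complex] at hdim
  simp only [Fintype.card_fin] at hdim
  linarith

theorem matNorm_smul {p : ℕ} {t : ℝ} (ht : 0 ≤ t) (M : Matrix (Fin p) (Fin p) ℂ) :
    matNorm (t • M) = t * matNorm M := by
  rw [matNorm, matNorm, conjTranspose_smul, star_trivial, smul_mul_smul_comm, trace_smul,
    Complex.smul_re, smul_eq_mul, Real.sqrt_mul (mul_self_nonneg t), Real.sqrt_mul_self ht]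

open scoped ComplexOrder in
theorem matNorm_pos {p : ℕ} {M : Matrix (Fin p) (Fin p) ℂ} (hM : M ≠ 0) : 0 < matNorm M := by
  have hnonneg : 0 ≤ (M * Mᴴ).trace := (posSemidef_self_mul_conjTranspose M).trace_nonneg
  have hne : (M * Mᴴ).trace ≠ 0 := trace_mul_conjTranspose_self_eq_zero_iff.not.2 hM
  exact Real.sqrt_pos.2 (by simpa using (Complex.lt_def.1 (hnonneg.lt_of_ne' hne)).1)

theorem continuous_matNorm (p : ℕ) : Continuous (matNorm : Matrix (Fin p) (Fin p) ℂ → ℝ) := by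
  unfold matNorm
  fun_prop

theorem conjAct_sqrt_smul_one {p : ℕ} {t : ℝ} (ht : 0 ≤ t) (m : SkewHerm p) :
    conjAct ((Real.sqrt t : ℂ) • (1 : Matrix (Fin p) (Fin p) ℂ)) m = t • m := by
  ext1
  simp [conjAct, conjTranspose_smul, ← mul_smul, Real.mul_self_sqrt ht]

theorem matNorm_conj_sqrt_smul_one_div_rpow {p : ℕ} {t : ℝ} (ht : 0 < t) {m : SkewHerm p}
    (hm : m ≠ 0) :
    (matNorm (((Real.sqrt t : ℂ) • 1)ᴴ * (m : Matrix (Fin p) (Fin p) ℂ) * ((Real.sqrt t : ℂ) • 1))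
        / matNorm (m : Matrix (Fin p) (Fin p) ℂ)) ^ ((p ^ 2 : ℝ) / 2)
      = t ^ ((finrank ℝ (SkewHerm p) : ℝ) / 2) := by
  have hconj : ((Real.sqrt t : ℂ) • 1)ᴴ * (m : Matrix (Fin p) (Fin p) ℂ) * ((Real.sqrt t : ℂ) • 1)
      = t • (m : Matrix (Fin p) (Fin p) ℂ) :=
    congrArg Subtype.val (conjAct_sqrt_smul_one ht.le m)
  rw [hconj, matNorm_smul ht.le,
    mul_div_cancel_right₀ _ (matNorm_pos fun h => hm (Subtype.ext h)).ne', finrank_skewHerm]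
  push_cast
  rfl

theorem f₀_eq_gaugeProfile (p : ℕ) :
    f₀ p = gaugeProfile fun m : SkewHerm p => matNorm (m : Matrix (Fin p) (Fin p) ℂ) := by
  funext m
  rw [f₀, gaugeProfile, finrank_skewHerm]
  push_cast
  rfl

/-- The 1-cocycle `β(s) = T_a(s) f₀ − f₀` of the representation `T_a` of the group `S` of
lower triangular matrices with positive real diagonal entries is not a coboundary: there
is no `g ∈ L²(N*)` with `T_a(s) f₀ − f₀ = T_a(s) g − g` a.e. for every `s ∈ S`.  Hence the
representation of Theorem 1 is special. -/
theorem cocycle_beta_S_not_coboundary (p : ℕ) (hp : 1 ≤ p)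
    (μ : Measure (SkewHerm p)) [μ.IsAddHaarMeasure] :
    ¬ ∃ g : SkewHerm p → ℂ, MemLp g 2 μ ∧
      ∀ s : Matrix (Fin p) (Fin p) ℂ,
        (∀ i j : Fin p, i < j → s i j = 0) →
        (∀ i : Fin p, 0 < (s i i).re ∧ (s i i).im = 0) →
        ∀ᵐ (m : SkewHerm p) ∂μ,
          (((matNorm (sᴴ * (m : Matrix (Fin p) (Fin p) ℂ) * s) /
              matNorm (m : Matrix (Fin p) (Fin p) ℂ)) ^ ((p ^ 2 : ℝ) / 2) : ℝ) : ℂ) *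
              (f₀ p (conjAct s m) : ℂ) - (f₀ p m : ℂ)
            = (((matNorm (sᴴ * (m : Matrix (Fin p) (Fin p) ℂ) * s) /
                matNorm (m : Matrix (Fin p) (Fin p) ℂ)) ^ ((p ^ 2 : ℝ) / 2) : ℝ) : ℂ) *
                g (conjAct s m) - g m := by
  rintro ⟨g, hg, hcob⟩
  set r : SkewHerm p → ℝ := fun m => matNorm (m : Matrix (Fin p) (Fin p) ℂ)
  have hr : PosHomogeneous r := fun t ht m => matNorm_smul ht.le _
  have hcont : Continuous r := (continuous_matNorm p).comp continuous_subtype_val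
  have : Nontrivial (SkewHerm p) :=
    Module.nontrivial_of_finrank_pos (by rw [finrank_skewHerm]; positivity)
  obtain ⟨m₀, hm₀⟩ := exists_ne (0 : SkewHerm p)
  obtain ⟨t, ht, hlt⟩ := hr.exists_lt_eLpNorm_dilation_gaugeProfile_sub μ hcont
    ⟨m₀, matNorm_pos fun h => hm₀ (Subtype.ext h)⟩ (C := 2 * eLpNorm g 2 μ)
    (ENNReal.mul_ne_top ENNReal.ofNat_ne_top hg.2.ne)
  have hscalar := hcob ((Real.sqrt t : ℂ) • 1)
    (fun i j hij => by simp [Matrix.one_apply_ne hij.ne])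
    (fun i => by simp [Real.sqrt_pos.2 ht])
  have hae : ∀ᵐ m ∂μ,
      ‖(dilation t (gaugeProfile r) - gaugeProfile r) m‖ = ‖(dilation t g - g) m‖ := by
    filter_upwards [hscalar, μ.ae_ne 0] with m hm hm0
    rw [matNorm_conj_sqrt_smul_one_div_rpow ht hm0, conjAct_sqrt_smul_one ht.le,
      f₀_eq_gaugeProfile] at hm
    rw [← Complex.norm_real]
    simp only [Pi.sub_apply, dilation, smul_eq_mul, Complex.real_smul]
    push_cast
    exact congrArg norm hm
  exact (hlt.trans_le ((eLpNorm_congr_norm_ae hae).trans_le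
    (eLpNorm_dilation_sub_le μ ht hg.1))).false

end
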